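/- For the constant marginal m ≡ v with v ∈ (0,1], the minimizers of soft-Dice SD_m over M are exactly the c ∈ M with SD_m(c) = 1 − 2v/(1+v): since m(ω) = v > D*/2 = v/(1+v) for all ω (as v < 1 + v), the unique minimizer (up to null sets) is c ≡ 1, which has volume 1 while ‖m‖₁ = v; hence soft-Dice exhibits volume bias of factor 1/v for constant marginals. -/

import Mathlib

/-! For a constant marginal `m ≡ v` the soft-Dice loss depends on `c` only through its volume
`V = ‖c‖₁ ∈ [0,1]`: `SD_m(c) = 1 - 2Vv/(V+v)`. Since `V ↦ V/(V+v)` is strictly increasing, the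
loss is minimal exactly when `V = 1`, i.e. when `c = 1` almost everywhere, because `c ≤ 1`. -/

open MeasureTheory Filter

noncomputable section

/-- The unit cube `[0,1]^n`. -/
def cube (n : ℕ) : Set (Fin n → ℝ) := Set.univ.pi fun _ => Set.Icc (0:ℝ) 1

/-- The (normalized) Lebesgue measure on the unit cube. -/
def lam (n : ℕ) : Measure (Fin n → ℝ) := volume.restrict (cube n)

/-- The `L¹`-volume `‖f‖₁ = ∫ f dλ` (for nonnegative `f`). -/
def vol1 (n : ℕ) (f : (Fin n → ℝ) → ℝ) : ℝ := ∫ ω, f ω ∂(lam n)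

/-- The Dice score `D_m(s) = 2∫ s·m dλ / (‖s‖₁ + ‖m‖₁)`. -/
def Dice (n : ℕ) (m s : (Fin n → ℝ) → ℝ) : ℝ :=
  2 * (∫ ω, s ω * m ω ∂(lam n)) / (vol1 n s + vol1 n m)

/-- The soft-Dice loss `SD_m(c) = 1 - 2∫ c·m dλ / (‖c‖₁ + ‖m‖₁)`. -/
def softDice (n : ℕ) (m c : (Fin n → ℝ) → ℝ) : ℝ :=
  1 - 2 * (∫ ω, c ω * m ω ∂(lam n)) / (vol1 n c + vol1 n m)

/-- Membership in `M`: measurable with values in `[0,1]`. -/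
def MemM (n : ℕ) (m : (Fin n → ℝ) → ℝ) : Prop :=
  Measurable m ∧ ∀ ω, m ω ∈ Set.Icc (0:ℝ) 1

/-- Membership in `S`: measurable with values in `{0,1}`. -/
def MemS (n : ℕ) (s : (Fin n → ℝ) → ℝ) : Prop :=
  Measurable s ∧ ∀ ω, s ω = 0 ∨ s ω = 1

/-- The set of soft-Dice values over `M`. -/
def SDvals (n : ℕ) (m : (Fin n → ℝ) → ℝ) : Set ℝ :=
  {x : ℝ | ∃ c, MemM n c ∧ x = softDice n m c}

/-- The set of Dice values over `S`. -/
def Dvals (n : ℕ) (m : (Fin n → ℝ) → ℝ) : Set ℝ :=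
  {x : ℝ | ∃ s, MemS n s ∧ x = Dice n m s}

theorem strictMonoOn_mul_div_add {v : ℝ} (hv : 0 < v) :
    StrictMonoOn (fun V : ℝ => 2 * (V * v) / (V + v)) (Set.Ici 0) := by
  intro a ha b hb hab
  simp only [Set.mem_Ici] at ha hb
  rw [div_lt_div_iff₀ (by positivity) (by positivity)]
  nlinarith [mul_lt_mul_of_pos_right hab (pow_pos hv 2)]

theorem volume_cube (n : ℕ) : volume (cube n) = 1 := by
  rw [cube, volume_pi_pi]
  simp

instance (n : ℕ) : IsProbabilityMeasure (lam n) :=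
  ⟨by rw [lam, Measure.restrict_apply_univ, volume_cube]⟩

namespace MemM

variable {n : ℕ} {c : (Fin n → ℝ) → ℝ}

theorem integrable (hc : MemM n c) : Integrable c (lam n) :=
  (integrable_const (1 : ℝ)).mono' hc.1.aestronglyMeasurable <| .of_forall fun ω => by
    rw [Real.norm_eq_abs, abs_of_nonneg (hc.2 ω).1]
    exact (hc.2 ω).2

theorem vol1_nonneg (hc : MemM n c) : 0 ≤ vol1 n c :=
  integral_nonneg fun ω => (hc.2 ω).1

theorem vol1_le_one (hc : MemM n c) : vol1 n c ≤ 1 := by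
  simpa [vol1] using integral_mono hc.integrable (integrable_const 1) fun ω => (hc.2 ω).2

theorem vol1_eq_one_iff (hc : MemM n c) : vol1 n c = 1 ↔ ∀ᵐ ω ∂(lam n), c ω = 1 := by
  have h := integral_eq_iff_of_ae_le hc.integrable (integrable_const (1 : ℝ))
    (.of_forall fun ω => (hc.2 ω).2)
  simpa [vol1, EventuallyEq] using h

end MemM

theorem softDice_const (n : ℕ) (v : ℝ) (c : (Fin n → ℝ) → ℝ) :
    softDice n (fun _ => v) c = 1 - 2 * (vol1 n c * v) / (vol1 n c + v) := by
  simp [softDice, vol1, integral_mul_const]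

theorem constant_marginal_soft_dice_minimizer
    (n : ℕ) (v : ℝ) (hv : v ∈ Set.Ioc (0:ℝ) 1) :
    sInf (SDvals n (fun _ => v)) = 1 - 2 * v / (1 + v) ∧
    ∀ c : (Fin n → ℝ) → ℝ, MemM n c →
      (softDice n (fun _ => v) c = 1 - 2 * v / (1 + v) ↔
        ∀ᵐ ω ∂(lam n), c ω = 1) := by
  have hmono := strictMonoOn_mul_div_add hv.1
  have hmin : 1 - 2 * v / (1 + v) = softDice n (fun _ => v) fun _ => 1 := by
    simp [softDice_const, vol1]
  have hvol {c} (hc : MemM n c) : vol1 n c ∈ Set.Ici 0 := hc.vol1_nonneg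
  have hone : (1 : ℝ) ∈ Set.Ici 0 := Set.mem_Ici.mpr zero_le_one
  refine ⟨IsLeast.csInf_eq ⟨⟨_, ⟨measurable_const, fun _ => by simp⟩, hmin⟩, ?_⟩, ?_⟩
  · rintro _ ⟨c, hc, rfl⟩
    rw [hmin, softDice_const, softDice_const, sub_le_sub_iff_left]
    simpa [vol1] using hmono.monotoneOn (hvol hc) hone hc.vol1_le_one
  · intro c hc
    rw [hmin, softDice_const, softDice_const, sub_right_inj, ← hc.vol1_eq_one_iff]
    simpa [vol1] using hmono.injOn.eq_iff (hvol hc) hone
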